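/- arXiv:2004.05206 — 3 statements merged into one kernel-verified Lean document; each statement's English description precedes it below -/
import Mathlib

section
/- Let 0<p<1. For every ε>0 and every f ∈ ℓ_p, Σ_j |f(j)| ≤ max{ ε^{−p/(1−p)} · sup_j |f(j)| , ε · ‖f‖_p }. (That is, the unit vector system of ℓ_p is strongly absolute with strongly absolute function A(ε) ≤ ε^{−p/(1−p)}.) -/
open scoped BigOperators

/-- For `0 < p < 1`, membership in `ℓ_p`: the sequence `(|f j|^p)_j` is summable. -/
def MemLpSeq (p : ℝ) (f : ℕ → ℝ) : Prop := Summable fun j => |f j| ^ p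

/-- The `p`-norm `‖f‖_p = (∑_j |f j|^p)^(1/p)`. -/
noncomputable def pNorm (p : ℝ) (f : ℕ → ℝ) : ℝ := (∑' j, |f j| ^ p) ^ (1 / p)

/-!
With `M = sup_j |f j|` and `S = ∑_j |f j|^p`, the pointwise bound `|f j| ≤ M^(1-p) |f j|^p`
gives `∑_j |f j| ≤ M^(1-p) S`. The exponent `p/(1-p)` is exactly the one for which
`M^(1-p) S = (ε^(-p/(1-p)) M)^(1-p) (ε S^(1/p))^p`, and a weighted geometric mean of two
nonnegative numbers is at most their maximum.
-/

namespace Real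

theorem le_rpow_sub_mul_rpow {x M p : ℝ} (hx : 0 ≤ x) (hxM : x ≤ M) (hp : p ≤ 1) :
    x ≤ M ^ (1 - p) * x ^ p := by
  rcases hx.eq_or_lt with rfl | hx
  · have hM : 0 ≤ M := hxM
    positivity
  · calc x = x ^ (1 - p) * x ^ p := by rw [← rpow_add hx, sub_add_cancel, rpow_one]
      _ ≤ M ^ (1 - p) * x ^ p := by gcongr

theorem rpow_sub_mul_rpow_le_max {a b θ : ℝ} (ha : 0 ≤ a) (hb : 0 ≤ b) (hθ₀ : 0 ≤ θ)
    (hθ₁ : θ ≤ 1) : a ^ (1 - θ) * b ^ θ ≤ max a b :=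
  calc a ^ (1 - θ) * b ^ θ ≤ max a b ^ (1 - θ) * max a b ^ θ := by
        gcongr
        exacts [le_max_left a b, le_max_right a b]
    _ = max a b := by
        rw [← rpow_add' (ha.trans (le_max_left a b)) (by simp), sub_add_cancel, rpow_one]

end Real

theorem pNorm_nonneg (p : ℝ) (f : ℕ → ℝ) : 0 ≤ pNorm p f := by
  unfold pNorm
  positivity

namespace MemLpSeq

variable {p : ℝ} {f : ℕ → ℝ}

theorem abs_le_pNorm (hf : MemLpSeq p f) (hp : 0 < p) (j : ℕ) : |f j| ≤ pNorm p f :=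
  calc |f j| = (|f j| ^ p) ^ (1 / p) := by
        rw [← Real.rpow_mul (abs_nonneg _), mul_one_div_cancel hp.ne', Real.rpow_one]
    _ ≤ pNorm p f := by
        rw [pNorm]
        gcongr
        exact hf.le_tsum j fun _ _ => by positivity

theorem bddAbove_range_abs (hf : MemLpSeq p f) (hp : 0 < p) :
    BddAbove (Set.range fun j => |f j|) :=
  ⟨pNorm p f, Set.forall_mem_range.2 (hf.abs_le_pNorm hp)⟩

theorem tsum_abs_le (hf : MemLpSeq p f) (hp₀ : 0 < p) (hp₁ : p ≤ 1) :
    ∑' j, |f j| ≤ (⨆ j, |f j|) ^ (1 - p) * ∑' j, |f j| ^ p := by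
  have hpointwise (j : ℕ) : |f j| ≤ (⨆ j, |f j|) ^ (1 - p) * |f j| ^ p :=
    Real.le_rpow_sub_mul_rpow (abs_nonneg _) (le_ciSup (hf.bddAbove_range_abs hp₀) j) hp₁
  have hsum : Summable (fun j => (⨆ j, |f j|) ^ (1 - p) * |f j| ^ p) := hf.mul_left _
  calc ∑' j, |f j| ≤ ∑' j, (⨆ j, |f j|) ^ (1 - p) * |f j| ^ p :=
        (hsum.of_nonneg_of_le (fun _ => abs_nonneg _) hpointwise).tsum_le_tsum hpointwise hsum
    _ = _ := tsum_mul_left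

end MemLpSeq

/-- The unit vector system of `ℓ_p`, `0<p<1`, is strongly absolute with
strongly absolute function `A(ε) ≤ ε^(-p/(1-p))`:
`∑_j |f j| ≤ max (ε^(-p/(1-p)) · sup_j |f j|) (ε · ‖f‖_p)`. -/
theorem stmt1 (p : ℝ) (hp0 : 0 < p) (hp1 : p < 1) (ε : ℝ) (hε : 0 < ε)
    (f : ℕ → ℝ) (hf : MemLpSeq p f) :
    ∑' j, |f j| ≤ max (ε ^ (-(p / (1 - p))) * ⨆ j, |f j|) (ε * pNorm p f) := by
  set M := ⨆ j, |f j|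
  set S := ∑' j, |f j| ^ p
  have hM : 0 ≤ M := Real.iSup_nonneg fun _ => abs_nonneg _
  have hS : 0 ≤ S := tsum_nonneg fun _ => by positivity
  have hsplit :
      M ^ (1 - p) * S = (ε ^ (-(p / (1 - p))) * M) ^ (1 - p) * (ε * pNorm p f) ^ p := by
    have hexp : -(p / (1 - p)) * (1 - p) = -p := by field_simp [(sub_pos.2 hp1).ne']
    rw [Real.mul_rpow (by positivity) hM, Real.mul_rpow hε.le (pNorm_nonneg p f), pNorm,
      ← Real.rpow_mul hε.le, ← Real.rpow_mul hS, hexp, one_div_mul_cancel hp0.ne',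
      Real.rpow_one, Real.rpow_neg hε.le]
    field_simp
  calc ∑' j, |f j| ≤ M ^ (1 - p) * S := hf.tsum_abs_le hp0 hp1.le
    _ = _ := hsplit
    _ ≤ _ := Real.rpow_sub_mul_rpow_le_max (by positivity)
      (mul_nonneg hε.le (pNorm_nonneg p f)) hp0.le hp1.le
end

section
/- Let 0<p<1 and let (x_n)_{n∈ℕ} be a sequence in ℓ_p that is suppression unconditional for constant coefficients in the following sense: there is C₀ ≥ 1 such that for every finite A ⊆ ℕ and all choices of signs (θ_n)_{n∈A}, (ε_n)_{n∈A} ∈ {−1,1}^A, ‖Σ_{n∈A} θ_n x_n‖_p ≤ C₀ ‖Σ_{n∈A} ε_n x_n‖_p. Then there exist constants 0<c≤C<∞, depending only on p and C₀, such that for every finite A ⊆ ℕ: c·( Σ_j ( Σ_{n∈A} x_n(j)² )^{p/2} )^{1/p} ≤ ‖ Σ_{n∈A} x_n ‖_p ≤ C·( Σ_j ( Σ_{n∈A} x_n(j)² )^{p/2} )^{1/p}. -/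
/-!
Average over the `2 ^ #A` sign patterns on `A`. For each coordinate `j`, Khintchine's inequality
with explicit constants bounds the sum over all patterns of `|∑ ± x n j| ^ p` between
`2 ^ #A / 24` and `2 ^ #A` times `(∑ n, x n j ^ 2) ^ (p / 2)`: the upper bound is Jensen for the
concave map `t ↦ t ^ (p / 2)` applied to the second moment, the lower bound a Paley–Zygmund count
using the fourth moment. Sum over `j` and compare every signed sum with the plain one through the
unconditionality assumption raised to the power `p`; this gives `C = C₀` and
`c = (24 ^ (1 / p) * C₀)⁻¹`.
-/

open scoped BigOperators

open Finset

lemma Real.abs_rpow_eq_sq_rpow_half (p t : ℝ) : |t| ^ p = (t ^ 2) ^ (p / 2) := by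
  rw [← sq_abs, ← Real.rpow_natCast_mul (abs_nonneg t), Nat.cast_ofNat,
    mul_div_cancel₀ p two_ne_zero]

lemma Real.rpow_sum_le_sum_rpow {ι : Type*} {q : ℝ} (hq0 : 0 < q) (hq1 : q ≤ 1) (s : Finset ι)
    {u : ι → ℝ} (hu : ∀ n ∈ s, 0 ≤ u n) :
    (∑ n ∈ s, u n) ^ q ≤ ∑ n ∈ s, u n ^ q :=
  le_sum_of_subadditive_on_pred (· ^ q) (0 ≤ ·) (by simp [Real.zero_rpow hq0.ne'])
    (fun _ _ ha hb => Real.rpow_add_le_add_rpow ha hb hq0.le hq1) (fun _ _ => add_nonneg) u hu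

lemma Real.rpow_one_div_le_mul_rpow_one_div_iff {p K X Y : ℝ} (hp : 0 < p) (hK : 0 ≤ K)
    (hX : 0 ≤ X) (hY : 0 ≤ Y) :
    X ^ (1 / p) ≤ K * Y ^ (1 / p) ↔ X ≤ K ^ p * Y := by
  have hKY : K * Y ^ p⁻¹ = (K ^ p * Y) ^ p⁻¹ := by
    rw [Real.mul_rpow (by positivity) hY, Real.rpow_rpow_inv hK hp.ne']
  rw [one_div, hKY, Real.rpow_le_rpow_iff hX (by positivity) (by positivity)]

/-- Paley–Zygmund inequality, in counting form. -/
lemma sq_sum_sub_le_card_filter_mul_sum_sq {β : Type*} (s : Finset β) (f : β → ℝ) {t : ℝ}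
    (ht : 0 ≤ t) (hts : t * #s ≤ ∑ i ∈ s, f i) :
    (∑ i ∈ s, f i - t * #s) ^ 2 ≤ #{i ∈ s | t ≤ f i} * ∑ i ∈ s, f i ^ 2 := by
  have hsmall : ∑ i ∈ s with ¬ t ≤ f i, f i ≤ t * #s :=
    calc ∑ i ∈ s with ¬ t ≤ f i, f i ≤ #{i ∈ s | ¬ t ≤ f i} • t :=
          sum_le_card_nsmul _ _ _ fun i hi => (not_le.1 (mem_filter.1 hi).2).le
      _ ≤ t * #s := by
          rw [nsmul_eq_mul, mul_comm]
          exact mul_le_mul_of_nonneg_left (by exact_mod_cast card_filter_le _ _) ht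
  have hlarge : ∑ i ∈ s, f i - t * #s ≤ ∑ i ∈ s with t ≤ f i, f i := by
    linarith [sum_filter_add_sum_filter_not s (t ≤ f ·) f]
  calc (∑ i ∈ s, f i - t * #s) ^ 2 ≤ (∑ i ∈ s with t ≤ f i, f i) ^ 2 :=
        pow_le_pow_left₀ (sub_nonneg.2 hts) hlarge 2
    _ ≤ #{i ∈ s | t ≤ f i} * ∑ i ∈ s with t ≤ f i, f i ^ 2 := sq_sum_le_card_mul_sum_sq
    _ ≤ #{i ∈ s | t ≤ f i} * ∑ i ∈ s, f i ^ 2 :=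
        mul_le_mul_of_nonneg_left
          (sum_le_sum_of_subset_of_nonneg (filter_subset _ _) fun i _ _ => sq_nonneg (f i))
          (Nat.cast_nonneg _)

section Khintchine

variable {ι : Type*} [DecidableEq ι]

/-- `S ⊆ A` encodes the sign pattern that is `+1` on `S` and `-1` off `S`, so sums over
`A.powerset` average over all sign patterns on `A`. -/
def signOf (S : Finset ι) (n : ι) : ℝ := if n ∈ S then 1 else -1

lemma signOf_eq_one_or_neg_one (S : Finset ι) (n : ι) : signOf S n = 1 ∨ signOf S n = -1 := by
  unfold signOf; split_ifs <;> simp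

def signedSum (A S : Finset ι) (a : ι → ℝ) : ℝ := ∑ n ∈ A, signOf S n * a n

lemma sum_powerset_insert_signedSum (f : ℝ → ℝ) (a : ι → ℝ) {m : ι} {B : Finset ι}
    (hm : m ∉ B) :
    ∑ S ∈ (insert m B).powerset, f (signedSum (insert m B) S a)
      = ∑ S ∈ B.powerset, (f (signedSum B S a - a m) + f (signedSum B S a + a m)) := by
  rw [sum_powerset_insert hm, ← sum_add_distrib]
  refine sum_congr rfl fun S hS => ?_
  have hmS : m ∉ S := fun h => hm (mem_powerset.1 hS h)
  have hsign : ∀ n ∈ B, signOf (insert m S) n = signOf S n := fun n hn => by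
    simp [signOf, ne_of_mem_of_not_mem hn hm]
  have hmS' : signOf S m = -1 := if_neg hmS
  have hmS'' : signOf (insert m S) m = 1 := if_pos (mem_insert_self m S)
  simp only [signedSum, sum_insert hm, sum_congr rfl fun n hn => congrArg (· * a n) (hsign n hn),
    hmS', hmS'']
  congr 2 <;> ring

lemma sum_powerset_signedSum_sq (a : ι → ℝ) (A : Finset ι) :
    ∑ S ∈ A.powerset, signedSum A S a ^ 2 = 2 ^ #A * ∑ n ∈ A, a n ^ 2 := by
  induction A using Finset.induction_on with
  | empty => simp [signedSum]
  | @insert m B hm ih =>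
    have hpair : ∀ s : ℝ, (s - a m) ^ 2 + (s + a m) ^ 2 = 2 * s ^ 2 + 2 * a m ^ 2 :=
      fun s => by ring
    simp only [sum_powerset_insert_signedSum (· ^ 2) a hm, hpair, sum_add_distrib, ← mul_sum,
      ih, sum_const, card_powerset, card_insert_of_notMem hm, sum_insert hm, nsmul_eq_mul]
    push_cast
    ring

lemma sum_powerset_signedSum_pow_four_le (a : ι → ℝ) (A : Finset ι) :
    ∑ S ∈ A.powerset, signedSum A S a ^ 4 ≤ 3 * 2 ^ #A * (∑ n ∈ A, a n ^ 2) ^ 2 := by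
  induction A using Finset.induction_on with
  | empty => simp [signedSum]
  | @insert m B hm ih =>
    have hpair : ∀ s : ℝ, (s - a m) ^ 4 + (s + a m) ^ 4
        = 2 * s ^ 4 + 12 * a m ^ 2 * s ^ 2 + 2 * a m ^ 4 := fun s => by ring
    rw [sum_powerset_insert_signedSum (· ^ 4) a hm]
    simp only [hpair, sum_add_distrib, ← mul_sum, sum_powerset_signedSum_sq, sum_const,
      card_powerset, card_insert_of_notMem hm, sum_insert hm, nsmul_eq_mul]
    push_cast
    rw [pow_succ (2 : ℝ) #B]
    nlinarith [mul_nonneg (pow_nonneg zero_le_two #B) (sq_nonneg (a m ^ 2))]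

lemma card_div_twelve_le_card_filter_signedSum_sq (a : ι → ℝ) (A : Finset ι)
    (hQ : 0 < ∑ n ∈ A, a n ^ 2) :
    (2 : ℝ) ^ #A / 12
      ≤ #{S ∈ A.powerset | (∑ n ∈ A, a n ^ 2) / 2 ≤ signedSum A S a ^ 2} := by
  set Q := ∑ n ∈ A, a n ^ 2
  set K : ℝ := ↑(#{S ∈ A.powerset | Q / 2 ≤ signedSum A S a ^ 2})
  have hN : (0 : ℝ) < 2 ^ #A := by positivity
  have hPZ := sq_sum_sub_le_card_filter_mul_sum_sq A.powerset (signedSum A · a ^ 2)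
    (t := Q / 2) (by positivity) (by
      rw [sum_powerset_signedSum_sq, card_powerset]
      push_cast
      nlinarith)
  simp only [sum_powerset_signedSum_sq, card_powerset, ← pow_mul] at hPZ
  push_cast at hPZ
  have hmoments : (2 ^ #A * Q / 2) ^ 2 ≤ K * (3 * 2 ^ #A * Q ^ 2) :=
    calc (2 ^ #A * Q / 2) ^ 2 = (2 ^ #A * Q - Q / 2 * 2 ^ #A) ^ 2 := by ring
      _ ≤ K * ∑ S ∈ A.powerset, signedSum A S a ^ 4 := hPZ
      _ ≤ K * (3 * 2 ^ #A * Q ^ 2) :=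
          mul_le_mul_of_nonneg_left (sum_powerset_signedSum_pow_four_le a A) (Nat.cast_nonneg _)
  nlinarith [mul_pos hN (pow_pos hQ 2)]

lemma sum_powerset_abs_signedSum_rpow_le {p : ℝ} (hp0 : 0 ≤ p) (hp2 : p ≤ 2) (a : ι → ℝ)
    (A : Finset ι) :
    ∑ S ∈ A.powerset, |signedSum A S a| ^ p ≤ 2 ^ #A * (∑ n ∈ A, a n ^ 2) ^ (p / 2) := by
  have hN : (0 : ℝ) < 2 ^ #A := by positivity
  have hw : ∑ _S ∈ A.powerset, ((2 : ℝ) ^ #A)⁻¹ = 1 := by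
    rw [sum_const, card_powerset, nsmul_eq_mul]
    push_cast
    exact mul_inv_cancel₀ hN.ne'
  have hJensen := (Real.concaveOn_rpow (p := p / 2) (by positivity) (by linarith)).le_map_sum
    (t := A.powerset) (w := fun _ => ((2 : ℝ) ^ #A)⁻¹) (p := (signedSum A · a ^ 2))
    (fun _ _ => by positivity) hw (fun S _ => sq_nonneg (signedSum A S a))
  simp only [smul_eq_mul, ← mul_sum, sum_powerset_signedSum_sq, inv_mul_cancel_left₀ hN.ne',
    ← Real.abs_rpow_eq_sq_rpow_half] at hJensen
  rwa [inv_mul_le_iff₀ hN] at hJensen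

lemma le_sum_powerset_abs_signedSum_rpow {p : ℝ} (hp0 : 0 < p) (hp2 : p ≤ 2) (a : ι → ℝ)
    (A : Finset ι) :
    2 ^ #A * (∑ n ∈ A, a n ^ 2) ^ (p / 2) / 24
      ≤ ∑ S ∈ A.powerset, |signedSum A S a| ^ p := by
  set Q := ∑ n ∈ A, a n ^ 2
  rcases (show 0 ≤ Q from sum_nonneg fun n _ => sq_nonneg (a n)).eq_or_lt with hQ | hQ
  · rw [← hQ, Real.zero_rpow (by positivity), mul_zero, zero_div]
    exact sum_nonneg fun _ _ => by positivity
  have hhalf : Q ^ (p / 2) / 2 ≤ (Q / 2) ^ (p / 2) := by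
    have h2 : (2 : ℝ) ^ (p / 2) ≤ 2 :=
      Real.rpow_le_self_of_one_le one_le_two (by linarith)
    rw [Real.div_rpow hQ.le zero_le_two]
    gcongr
  calc 2 ^ #A * Q ^ (p / 2) / 24 = 2 ^ #A / 12 * (Q ^ (p / 2) / 2) := by ring
    _ ≤ #{S ∈ A.powerset | Q / 2 ≤ signedSum A S a ^ 2} * (Q / 2) ^ (p / 2) :=
        mul_le_mul (card_div_twelve_le_card_filter_signedSum_sq a A hQ) hhalf
          (by positivity) (by positivity)
    _ = ∑ S ∈ A.powerset with Q / 2 ≤ signedSum A S a ^ 2, (Q / 2) ^ (p / 2) := by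
        rw [sum_const, nsmul_eq_mul]
    _ ≤ ∑ S ∈ A.powerset with Q / 2 ≤ signedSum A S a ^ 2, |signedSum A S a| ^ p :=
        sum_le_sum fun S hS => by
          rw [Real.abs_rpow_eq_sq_rpow_half]
          exact Real.rpow_le_rpow (by positivity) (mem_filter.1 hS).2 (by positivity)
    _ ≤ ∑ S ∈ A.powerset, |signedSum A S a| ^ p :=
        sum_le_sum_of_subset_of_nonneg (filter_subset _ _) fun _ _ _ => by positivity

end Khintchine

lemma MemLpSeq.const_mul {p : ℝ} {f : ℕ → ℝ} (hf : MemLpSeq p f) (c : ℝ) :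
    MemLpSeq p fun j => c * f j := by
  simpa only [MemLpSeq, abs_mul, Real.mul_rpow (abs_nonneg _) (abs_nonneg _)] using hf.mul_left _

lemma MemLpSeq.finset_sum {ι : Type*} {p : ℝ} (hp0 : 0 < p) (hp1 : p ≤ 1) {A : Finset ι}
    {f : ι → ℕ → ℝ} (hf : ∀ n ∈ A, MemLpSeq p (f n)) :
    MemLpSeq p fun j => ∑ n ∈ A, f n j := by
  refine Summable.of_nonneg_of_le (fun j => by positivity) (fun j => ?_) (summable_sum hf)
  calc |∑ n ∈ A, f n j| ^ p ≤ (∑ n ∈ A, |f n j|) ^ p :=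
        Real.rpow_le_rpow (abs_nonneg _) (abs_sum_le_sum_abs _ _) hp0.le
    _ ≤ ∑ n ∈ A, |f n j| ^ p := Real.rpow_sum_le_sum_rpow hp0 hp1 A fun n _ => abs_nonneg _

section SignAveraging

variable {ι : Type*} [DecidableEq ι] {p : ℝ} {x : ι → ℕ → ℝ} {A : Finset ι}

lemma memLpSeq_signedSum (hp0 : 0 < p) (hp1 : p ≤ 1) (hx : ∀ n ∈ A, MemLpSeq p (x n))
    (S : Finset ι) : MemLpSeq p fun j => signedSum A S (x · j) :=
  MemLpSeq.finset_sum hp0 hp1 fun n hn => (hx n hn).const_mul _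

lemma summable_sum_powerset_abs_signedSum_rpow (hp0 : 0 < p) (hp1 : p ≤ 1)
    (hx : ∀ n ∈ A, MemLpSeq p (x n)) :
    Summable fun j => ∑ S ∈ A.powerset, |signedSum A S (x · j)| ^ p :=
  summable_sum fun S _ => memLpSeq_signedSum hp0 hp1 hx S

lemma summable_sum_sq_rpow (hp0 : 0 < p) (hp1 : p ≤ 1) (hx : ∀ n ∈ A, MemLpSeq p (x n)) :
    Summable fun j => (∑ n ∈ A, x n j ^ 2) ^ (p / 2) := by
  refine Summable.of_nonneg_of_le (fun j => by positivity) (fun j => ?_)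
    ((summable_sum_powerset_abs_signedSum_rpow hp0 hp1 hx).mul_left (24 / 2 ^ #A))
  have := le_sum_powerset_abs_signedSum_rpow hp0 (by linarith) (x · j) A
  rw [div_mul_eq_mul_div, le_div_iff₀ (by positivity)]
  linarith

lemma sum_powerset_tsum_abs_signedSum_rpow_le (hp0 : 0 < p) (hp1 : p ≤ 1)
    (hx : ∀ n ∈ A, MemLpSeq p (x n)) :
    ∑ S ∈ A.powerset, ∑' j, |signedSum A S (x · j)| ^ p
      ≤ 2 ^ #A * ∑' j, (∑ n ∈ A, x n j ^ 2) ^ (p / 2) := by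
  rw [← Summable.tsum_finsetSum fun S _ => memLpSeq_signedSum hp0 hp1 hx S, ← tsum_mul_left]
  exact (summable_sum_powerset_abs_signedSum_rpow hp0 hp1 hx).tsum_le_tsum
    (fun j => sum_powerset_abs_signedSum_rpow_le hp0.le (by linarith) (x · j) A)
    ((summable_sum_sq_rpow hp0 hp1 hx).mul_left _)

lemma le_sum_powerset_tsum_abs_signedSum_rpow (hp0 : 0 < p) (hp1 : p ≤ 1)
    (hx : ∀ n ∈ A, MemLpSeq p (x n)) :
    2 ^ #A / 24 * ∑' j, (∑ n ∈ A, x n j ^ 2) ^ (p / 2)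
      ≤ ∑ S ∈ A.powerset, ∑' j, |signedSum A S (x · j)| ^ p := by
  rw [← Summable.tsum_finsetSum fun S _ => memLpSeq_signedSum hp0 hp1 hx S, ← tsum_mul_left]
  refine ((summable_sum_sq_rpow hp0 hp1 hx).mul_left _).tsum_le_tsum (fun j => ?_)
    (summable_sum_powerset_abs_signedSum_rpow hp0 hp1 hx)
  have := le_sum_powerset_abs_signedSum_rpow hp0 (by linarith) (x · j) A
  linarith

lemma tsum_abs_sum_rpow_le_of_le_signedSum (hp0 : 0 < p) (hp1 : p ≤ 1)
    (hx : ∀ n ∈ A, MemLpSeq p (x n)) {K : ℝ} (hK : 0 ≤ K)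
    (h : ∀ S ∈ A.powerset,
      ∑' j, |∑ n ∈ A, x n j| ^ p ≤ K * ∑' j, |signedSum A S (x · j)| ^ p) :
    ∑' j, |∑ n ∈ A, x n j| ^ p ≤ K * ∑' j, (∑ n ∈ A, x n j ^ 2) ^ (p / 2) := by
  have hsum := sum_le_sum h
  rw [sum_const, card_powerset, nsmul_eq_mul, ← mul_sum] at hsum
  refine le_of_mul_le_mul_left ?_ (by positivity : (0 : ℝ) < 2 ^ #A)
  calc (2 : ℝ) ^ #A * ∑' j, |∑ n ∈ A, x n j| ^ p
      ≤ K * ∑ S ∈ A.powerset, ∑' j, |signedSum A S (x · j)| ^ p := by exact_mod_cast hsum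
    _ ≤ K * (2 ^ #A * ∑' j, (∑ n ∈ A, x n j ^ 2) ^ (p / 2)) :=
        mul_le_mul_of_nonneg_left (sum_powerset_tsum_abs_signedSum_rpow_le hp0 hp1 hx) hK
    _ = 2 ^ #A * (K * ∑' j, (∑ n ∈ A, x n j ^ 2) ^ (p / 2)) := by ring

lemma tsum_sq_sum_rpow_le_of_signedSum_le (hp0 : 0 < p) (hp1 : p ≤ 1)
    (hx : ∀ n ∈ A, MemLpSeq p (x n)) {K : ℝ}
    (h : ∀ S ∈ A.powerset,
      ∑' j, |signedSum A S (x · j)| ^ p ≤ K * ∑' j, |∑ n ∈ A, x n j| ^ p) :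
    ∑' j, (∑ n ∈ A, x n j ^ 2) ^ (p / 2) ≤ 24 * K * ∑' j, |∑ n ∈ A, x n j| ^ p := by
  have hsum := (le_sum_powerset_tsum_abs_signedSum_rpow hp0 hp1 hx).trans (sum_le_sum h)
  rw [sum_const, card_powerset, nsmul_eq_mul] at hsum
  push_cast at hsum
  have hN : (0 : ℝ) < 2 ^ #A := by positivity
  nlinarith

end SignAveraging

/-- Square-function estimate in `ℓ_p`, `0<p<1`, for sequences which are
suppression unconditional for constant coefficients (SUCC): the constants
`c, C` depend only on `p` and the SUCC constant `C₀`. -/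
theorem stmt3 (p C₀ : ℝ) (hp0 : 0 < p) (hp1 : p < 1) (hC₀ : 1 ≤ C₀) :
    ∃ c C : ℝ, 0 < c ∧ c ≤ C ∧
      ∀ x : ℕ → ℕ → ℝ, (∀ n, MemLpSeq p (x n)) →
        (∀ A : Finset ℕ, ∀ θ ε : ℕ → ℝ,
          (∀ n ∈ A, θ n = 1 ∨ θ n = -1) → (∀ n ∈ A, ε n = 1 ∨ ε n = -1) →
          pNorm p (fun j => ∑ n ∈ A, θ n * x n j)
            ≤ C₀ * pNorm p (fun j => ∑ n ∈ A, ε n * x n j)) →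
        ∀ A : Finset ℕ,
          c * (∑' j, (∑ n ∈ A, x n j ^ 2) ^ (p / 2)) ^ (1 / p)
              ≤ pNorm p (fun j => ∑ n ∈ A, x n j) ∧
          pNorm p (fun j => ∑ n ∈ A, x n j)
              ≤ C * (∑' j, (∑ n ∈ A, x n j ^ 2) ^ (p / 2)) ^ (1 / p) := by
  have hC₀0 : 0 ≤ C₀ := by linarith
  refine ⟨(24 ^ (1 / p) * C₀)⁻¹, C₀, by positivity, ?_, fun x hx hsucc A => ?_⟩
  · exact (inv_le_one_of_one_le₀ (one_le_mul_of_one_le_of_one_le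
      (Real.one_le_rpow (by norm_num) (by positivity)) hC₀)).trans hC₀
  have hpow (θ ε : ℕ → ℝ) (hθ : ∀ n ∈ A, θ n = 1 ∨ θ n = -1)
      (hε : ∀ n ∈ A, ε n = 1 ∨ ε n = -1) :
      ∑' j, |∑ n ∈ A, θ n * x n j| ^ p
        ≤ C₀ ^ p * ∑' j, |∑ n ∈ A, ε n * x n j| ^ p :=
    (Real.rpow_one_div_le_mul_rpow_one_div_iff hp0 hC₀0 (tsum_nonneg fun _ => by positivity)
      (tsum_nonneg fun _ => by positivity)).1 (hsucc A θ ε hθ hε)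
  have hone : ∀ n ∈ A, (1 : ℝ) = 1 ∨ (1 : ℝ) = -1 := fun _ _ => Or.inl rfl
  have hsign (S : Finset ℕ) : ∀ n ∈ A, signOf S n = 1 ∨ signOf S n = -1 :=
    fun n _ => signOf_eq_one_or_neg_one S n
  have hupper := tsum_abs_sum_rpow_le_of_le_signedSum hp0 hp1.le (fun n _ => hx n)
    (Real.rpow_nonneg hC₀0 p) fun S _ => by
      simpa only [one_mul, signedSum] using hpow (fun _ => 1) (signOf S) hone (hsign S)
  have hlower := tsum_sq_sum_rpow_le_of_signedSum_le hp0 hp1.le (fun n _ => hx n) fun S _ => by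
      simpa only [one_mul, signedSum] using hpow (signOf S) (fun _ => 1) (hsign S) hone
  have hK : (24 ^ (1 / p) * C₀) ^ p = 24 * C₀ ^ p := by
    rw [Real.mul_rpow (by positivity) hC₀0, ← Real.rpow_mul (by norm_num),
      one_div_mul_cancel hp0.ne', Real.rpow_one]
  rw [← hK] at hlower
  refine ⟨?_, (Real.rpow_one_div_le_mul_rpow_one_div_iff hp0 hC₀0
    (tsum_nonneg fun _ => by positivity) (tsum_nonneg fun _ => by positivity)).2 hupper⟩
  rw [inv_mul_le_iff₀ (by positivity)]
  exact (Real.rpow_one_div_le_mul_rpow_one_div_iff hp0 (by positivity)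
    (tsum_nonneg fun _ => by positivity) (tsum_nonneg fun _ => by positivity)).2 hlower
end

section
/- Let X be a GT space and let (x_n)_{n∈ℕ} together with (x_n*)_{n∈ℕ} be a basis of X with the bounded restricted truncation operator property. Then there exist constants 0<c≤C<∞ such that c·m ≤ φ_l(m) and φ_u(m) ≤ C·m for every m ≥ 1; in particular, the basis is democratic. -/
/-!
Write `1_S = ∑_{n ∈ S} x_n`. The truncation property makes the sums `1_S` and the signed sums
`∑_{n ∈ A} ε_n x_n` comparable (`‖1_S‖ ≲ ‖∑_{n ∈ A} ε_n x_n‖` for `S ⊆ A`) and gives the weak-type estimate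
`t ‖1_S‖ ≲ ‖g‖` whenever `|x_n^*(g)| ≥ t` on `S`. Hence, if `‖1_S‖² ≳ v(|S|)` for all `S`, the
`j`-th largest coefficient of `g` is `≲ ‖g‖ / √v(j)`, so the coordinate operator
`T_A g = (x_n^*(g))_{n ∈ A}` into `ℓ_2` has `‖T_A‖² ≲ ∑_{j ≤ |A|} 1 / v(j)`. The GT inequality for
`T_A` and the family `(x_k)_{k ∈ A}` gives `|A| ≲ ‖T_A‖ ‖1_A‖`. Starting from `v = 1`, this
bootstraps to `‖1_S‖² ≳ |S|`, then `|S|^{3/2}`, then `|S|²`. The upper bound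
`‖1_S‖ ≤ (sup_n ‖x_n‖) |S|` is the triangle inequality.
-/

open scoped BigOperators ENNReal

/-- `X` is a GT space: every bounded operator into `ℓ_2` is absolutely summing,
with the absolutely summing norm controlled by `D·‖T‖`. -/
def IsGTSpace (X : Type*) [NormedAddCommGroup X] [NormedSpace ℝ X] : Prop :=
  ∃ D : ℝ, ∀ T : X →L[ℝ] lp (fun _ : ℕ => ℝ) 2, ∀ (B : Finset ℕ) (f : ℕ → X),
    ∃ ε : ℕ → ℝ, (∀ k, ε k = 1 ∨ ε k = -1) ∧
      ∑ k ∈ B, ‖T (f k)‖ ≤ D * ‖T‖ * ‖∑ k ∈ B, ε k • f k‖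

/-- `A` is a greedy set for the coefficient sequence `coef`. -/
def GreedySet (coef : ℕ → ℝ) (A : Finset ℕ) : Prop :=
  ∀ n ∈ A, ∀ k ∉ A, |coef k| ≤ |coef n|

/-- `(x_n)` together with bounded linear functionals `(x_n^*)` is a
(semi-normalized, fundamental, M-bounded Markushevich) basis of `X`. -/
structure IsXBasis {X : Type*} [NormedAddCommGroup X] [NormedSpace ℝ X]
    (x : ℕ → X) (xs : ℕ → X →L[ℝ] ℝ) : Prop where
  biorth : ∀ m n, xs m (x n) = if m = n then (1 : ℝ) else 0
  dense : ∀ f : X, ∀ ε > 0, ∃ (A : Finset ℕ) (c : ℕ → ℝ), ‖f - ∑ n ∈ A, c n • x n‖ < ε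
  norm_lb : ∃ c > 0, ∀ n, c ≤ ‖x n‖
  norm_ub : ∃ C : ℝ, ∀ n, ‖x n‖ ≤ C
  dual_ub : ∃ b : ℝ, ∀ n, ‖xs n‖ ≤ b

/-- The sign function, with the convention `sgn 0 = 1`. -/
noncomputable def sgn (a : ℝ) : ℝ := if a = 0 then 1 else a / |a|

/-- The basis has the bounded restricted truncation operator property:
`‖U(f,A)‖ ≤ C₀·‖f‖` for every greedy set `A` of `f`, where
`U(f,A) = (min_{n∈A} |x_n^*(f)|)·∑_{n∈A} sgn(x_n^*(f))·x_n`. -/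
def BRTP {X : Type*} [NormedAddCommGroup X] [NormedSpace ℝ X]
    (x : ℕ → X) (xs : ℕ → X →L[ℝ] ℝ) : Prop :=
  ∃ C₀ ≥ (1 : ℝ), ∀ (f : X) (A : Finset ℕ) (h : A.Nonempty),
    GreedySet (fun n => xs n f) A →
    ‖(A.inf' h fun n => |xs n f|) • ∑ n ∈ A, sgn (xs n f) • x n‖ ≤ C₀ * ‖f‖

/-- The basis is quasi-greedy: greedy projections are uniformly bounded. -/
def QuasiGreedyX {X : Type*} [NormedAddCommGroup X] [NormedSpace ℝ X]
    (x : ℕ → X) (xs : ℕ → X →L[ℝ] ℝ) : Prop :=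
  ∃ C₀ ≥ (1 : ℝ), ∀ (f : X) (A : Finset ℕ), GreedySet (fun n => xs n f) A →
    ‖∑ n ∈ A, xs n f • x n‖ ≤ C₀ * ‖f‖

open Finset

theorem sum_comp_le_sum_Icc_of_card_filter_le {α : Type*} [DecidableEq α] {u : ℕ → ℝ}
    (hu : AntitoneOn u (Set.Ici 1)) (ρ : α → ℕ) (A : Finset α) (hρ : ∀ a ∈ A, 1 ≤ ρ a)
    (hcard : ∀ j, #{a ∈ A | ρ a ≤ j} ≤ j) :
    ∑ a ∈ A, u (ρ a) ≤ ∑ j ∈ Icc 1 #A, u j := by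
  induction A using Finset.induction_on_max_value ρ with
  | empty => simp
  | insert a A ha hmax ih =>
    have hA : #(insert a A) ≤ ρ a := by
      have : {b ∈ insert a A | ρ b ≤ ρ a} = insert a A :=
        filter_true_of_mem fun b hb => (mem_insert.1 hb).elim (fun h => h ▸ le_rfl) (hmax b)
      simpa [this] using hcard (ρ a)
    have ih := ih (fun b hb => hρ b (mem_insert_of_mem hb))
      fun j => (card_le_card (filter_subset_filter _ (subset_insert a A))).trans (hcard j)
    rw [sum_insert ha, card_insert_of_notMem ha, sum_Icc_succ_top (by omega), add_comm]
    rw [card_insert_of_notMem ha] at hA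
    gcongr
    exact hu (Set.mem_Ici.2 (by omega)) (Set.mem_Ici.2 (hρ a (mem_insert_self a A))) hA

theorem sum_Icc_inv_le_two_mul_sqrt (m : ℕ) : ∑ j ∈ Icc 1 m, (j : ℝ)⁻¹ ≤ 2 * √m := by
  induction m with
  | zero => simp
  | succ m ih =>
    rw [sum_Icc_succ_top (by omega)]
    have ha := Real.sq_sqrt (by positivity : (0 : ℝ) ≤ m + 1)
    have hb := Real.sq_sqrt (Nat.cast_nonneg (α := ℝ) m)
    have hab : √(m : ℝ) ≤ √(m + 1) := Real.sqrt_le_sqrt (by linarith)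
    have hstep : ((m : ℝ) + 1)⁻¹ ≤ 2 * √(m + 1) - 2 * √m := by
      rw [inv_le_iff_one_le_mul₀ (by positivity)]
      nlinarith [Real.sqrt_nonneg (m : ℝ), sq_nonneg (√(m + 1 : ℝ) - √m)]
    push_cast
    linarith

theorem sum_Icc_inv_mul_sqrt_le (m : ℕ) (hm : 1 ≤ m) :
    ∑ j ∈ Icc 1 m, ((j : ℝ) * √j)⁻¹ ≤ 3 - 2 / √m := by
  induction m, hm using Nat.le_induction with
  | base => norm_num
  | succ m hm ih =>
    rw [sum_Icc_succ_top (by omega)]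
    have ha := Real.sq_sqrt (by positivity : (0 : ℝ) ≤ m + 1)
    have hb := Real.sq_sqrt (Nat.cast_nonneg (α := ℝ) m)
    have hb1 : 1 ≤ √(m : ℝ) := Real.one_le_sqrt.2 (by exact_mod_cast hm)
    have hab : √(m : ℝ) ≤ √(m + 1) := Real.sqrt_le_sqrt (by linarith)
    have hstep : (((m : ℝ) + 1) * √(m + 1))⁻¹ ≤ 2 / √m - 2 / √(m + 1) := by
      set a := √((m : ℝ) + 1)
      set b := √(m : ℝ)
      rw [← ha, div_sub_div _ _ (by positivity) (by positivity), inv_eq_one_div,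
        div_le_div_iff₀ (by positivity) (by positivity)]
      nlinarith [mul_nonneg (mul_nonneg (zero_le_one.trans hb1) (zero_le_one.trans (hb1.trans hab)))
        (sq_nonneg (a - b)), mul_nonneg (sub_nonneg.2 hab) (sq_nonneg a),
        mul_nonneg (sub_nonneg.2 hab) (sq_nonneg b)]
    push_cast
    linarith

theorem sum_Icc_inv_mul_sqrt_le_three (m : ℕ) : ∑ j ∈ Icc 1 m, ((j : ℝ) * √j)⁻¹ ≤ 3 := by
  rcases Nat.eq_zero_or_pos m with rfl | hm
  · simp
  · linarith [sum_Icc_inv_mul_sqrt_le m hm, (by positivity : 0 ≤ 2 / √(m : ℝ))]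

theorem sgn_eq_one_or_neg_one (a : ℝ) : sgn a = 1 ∨ sgn a = -1 := by
  unfold sgn
  split_ifs with h
  · exact Or.inl rfl
  · rcases lt_or_gt_of_ne h with h | h
    · right; rw [abs_of_neg h]; field_simp
    · left; rw [abs_of_pos h]; field_simp

/-- `BRTP x xs` unfolds to `∃ C₀ ≥ 1, TruncationBound x xs C₀`. -/
def TruncationBound {X : Type*} [NormedAddCommGroup X] [NormedSpace ℝ X]
    (x : ℕ → X) (xs : ℕ → X →L[ℝ] ℝ) (C₀ : ℝ) : Prop :=
  ∀ (f : X) (A : Finset ℕ) (h : A.Nonempty), GreedySet (fun n => xs n f) A →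
    ‖(A.inf' h fun n => |xs n f|) • ∑ n ∈ A, sgn (xs n f) • x n‖ ≤ C₀ * ‖f‖

section
variable {X : Type*} [NormedAddCommGroup X] [NormedSpace ℝ X] {x : ℕ → X}
  {xs : ℕ → X →L[ℝ] ℝ} {C₀ : ℝ}

theorem coord_sum_smul (hb : ∀ m n, xs m (x n) = if m = n then (1 : ℝ) else 0)
    (A : Finset ℕ) (c : ℕ → ℝ) (k : ℕ) :
    xs k (∑ n ∈ A, c n • x n) = if k ∈ A then c k else 0 := by
  simp only [map_sum, map_smul, hb, smul_eq_mul, mul_ite, mul_one, mul_zero, sum_ite_eq]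

theorem norm_sum_le_of_coord_eq (htr : TruncationBound x xs C₀) (hC₀ : 0 ≤ C₀) {f : X}
    (hf : ∀ k, |xs k f| ≤ 1) {s : ℝ} (hs : s = 1 ∨ s = -1) {B : Finset ℕ}
    (hB : ∀ n ∈ B, xs n f = s) : ‖∑ n ∈ B, x n‖ ≤ C₀ * ‖f‖ := by
  rcases B.eq_empty_or_nonempty with rfl | hne
  · simpa using mul_nonneg hC₀ (norm_nonneg f)
  have habs : ∀ n ∈ B, |xs n f| = 1 := fun n hn => by rcases hs with rfl | rfl <;> simp [hB n hn]
  have hsgn : ∀ n ∈ B, sgn (xs n f) = s := fun n hn => by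
    rcases hs with rfl | rfl <;> norm_num [hB n hn, sgn]
  have hgreedy : GreedySet (fun n => xs n f) B := fun n hn k _ => (habs n hn).symm ▸ hf k
  have hU := htr f B hne hgreedy
  rwa [inf'_congr hne rfl habs, inf'_const, one_smul, sum_congr rfl fun n hn => by rw [hsgn n hn],
    ← smul_sum, norm_smul, show ‖s‖ = 1 by rcases hs with rfl | rfl <;> simp, one_mul] at hU

theorem norm_sum_le_of_subset_signed (hb : ∀ m n, xs m (x n) = if m = n then (1 : ℝ) else 0)
    (htr : TruncationBound x xs C₀) (hC₀ : 0 ≤ C₀) {ε : ℕ → ℝ} (hε : ∀ n, ε n = 1 ∨ ε n = -1)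
    {S A : Finset ℕ} (hSA : S ⊆ A) :
    ‖∑ n ∈ S, x n‖ ≤ 2 * C₀ * ‖∑ n ∈ A, ε n • x n‖ := by
  have hcoord := coord_sum_smul hb A ε
  have hf : ∀ k, |xs k (∑ n ∈ A, ε n • x n)| ≤ 1 := fun k => by
    rw [hcoord]; split_ifs
    · rcases hε k with h | h <;> simp [h]
    · simp
  have hpart : ∀ s, s = 1 ∨ s = -1 → ‖∑ n ∈ S with ε n = s, x n‖ ≤ C₀ * ‖∑ n ∈ A, ε n • x n‖ :=
    fun s hs => norm_sum_le_of_coord_eq htr hC₀ hf hs fun n hn => by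
      rw [mem_filter] at hn; rw [hcoord, if_pos (hSA hn.1), hn.2]
  have hneg : {n ∈ S | ¬ε n = 1} = {n ∈ S | ε n = -1} :=
    filter_congr fun n _ => by rcases hε n with h | h <;> norm_num [h]
  calc ‖∑ n ∈ S, x n‖
      ≤ ‖∑ n ∈ S with ε n = 1, x n‖ + ‖∑ n ∈ S with ¬ε n = 1, x n‖ := by
        rw [← sum_filter_add_sum_filter_not S (fun n => ε n = 1)]; exact norm_add_le _ _
    _ ≤ C₀ * ‖∑ n ∈ A, ε n • x n‖ + C₀ * ‖∑ n ∈ A, ε n • x n‖ := by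
        rw [hneg]; exact add_le_add (hpart 1 (.inl rfl)) (hpart (-1) (.inr rfl))
    _ = 2 * C₀ * ‖∑ n ∈ A, ε n • x n‖ := by ring

theorem norm_sum_le_of_subset (hb : ∀ m n, xs m (x n) = if m = n then (1 : ℝ) else 0)
    (htr : TruncationBound x xs C₀) (hC₀ : 0 ≤ C₀) {S A : Finset ℕ} (hSA : S ⊆ A) :
    ‖∑ n ∈ S, x n‖ ≤ 2 * C₀ * ‖∑ n ∈ A, x n‖ := by
  simpa using norm_sum_le_of_subset_signed hb htr hC₀ (ε := fun _ => 1) (fun _ => .inl rfl) hSA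

theorem norm_sum_signed_le (hb : ∀ m n, xs m (x n) = if m = n then (1 : ℝ) else 0)
    (htr : TruncationBound x xs C₀) (hC₀ : 0 ≤ C₀) {ε : ℕ → ℝ} (hε : ∀ n, ε n = 1 ∨ ε n = -1)
    (A : Finset ℕ) : ‖∑ n ∈ A, ε n • x n‖ ≤ 4 * C₀ * ‖∑ n ∈ A, x n‖ := by
  have hpos : ∑ n ∈ A with ε n = 1, ε n • x n = ∑ n ∈ A with ε n = 1, x n :=
    sum_congr rfl fun n hn => by rw [(mem_filter.1 hn).2, one_smul]
  have hneg : ∑ n ∈ A with ¬ε n = 1, ε n • x n = -∑ n ∈ A with ¬ε n = 1, x n := by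
    rw [← sum_neg_distrib]
    exact sum_congr rfl fun n hn => by
      rw [((hε n).resolve_left (mem_filter.1 hn).2), neg_one_smul]
  calc ‖∑ n ∈ A, ε n • x n‖
      ≤ ‖∑ n ∈ A with ε n = 1, x n‖ + ‖∑ n ∈ A with ¬ε n = 1, x n‖ := by
        rw [← sum_filter_add_sum_filter_not A (fun n => ε n = 1), hpos, hneg, ← norm_neg
          (∑ n ∈ A with ¬ε n = 1, x n)]
        exact norm_add_le _ _
    _ ≤ 2 * C₀ * ‖∑ n ∈ A, x n‖ + 2 * C₀ * ‖∑ n ∈ A, x n‖ :=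
        add_le_add (norm_sum_le_of_subset hb htr hC₀ (filter_subset _ _))
          (norm_sum_le_of_subset hb htr hC₀ (filter_subset _ _))
    _ = 4 * C₀ * ‖∑ n ∈ A, x n‖ := by ring

-- The coefficients of `g` tend to zero: approximate `g` by a finite combination of the basis.
theorem finite_setOf_le_abs_coord (hx : IsXBasis x xs) {t : ℝ} (ht : 0 < t) (g : X) :
    {n | t ≤ |xs n g|}.Finite := by
  obtain ⟨b, hb⟩ := hx.dual_ub
  have hb0 : 0 ≤ b := (norm_nonneg _).trans (hb 0)
  obtain ⟨F, c, hp⟩ := hx.dense g (t / (b + 1)) (by positivity)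
  refine F.finite_toSet.subset fun n hn => ?_
  by_contra hnF
  rw [Finset.mem_coe] at hnF
  have hcoord : xs n g = xs n (g - ∑ k ∈ F, c k • x k) := by
    rw [map_sub, coord_sum_smul hx.biorth, if_neg hnF, sub_zero]
  have : |xs n g| < t := by
    calc |xs n g| ≤ b * ‖g - ∑ k ∈ F, c k • x k‖ := by
          rw [hcoord, ← Real.norm_eq_abs]
          exact ((xs n).le_opNorm _).trans (mul_le_mul_of_nonneg_right (hb n) (norm_nonneg _))
      _ ≤ b * (t / (b + 1)) := by gcongr
      _ < t := by rw [mul_div_assoc', div_lt_iff₀ (by positivity)]; nlinarith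
  exact not_le.2 this hn

theorem mul_norm_sum_le_of_le_abs_coord (hx : IsXBasis x xs) (htr : TruncationBound x xs C₀)
    (hC₀ : 0 ≤ C₀) {g : X} {t : ℝ} (ht : 0 ≤ t) {S : Finset ℕ} (hS : ∀ n ∈ S, t ≤ |xs n g|) :
    t * ‖∑ n ∈ S, x n‖ ≤ 2 * C₀ ^ 2 * ‖g‖ := by
  rcases ht.eq_or_lt with rfl | ht
  · simp only [zero_mul]; positivity
  rcases S.eq_empty_or_nonempty with rfl | hSne
  · simp only [sum_empty, norm_zero, mul_zero]; positivity
  set Λ := (finite_setOf_le_abs_coord hx ht g).toFinset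
  have hmem : ∀ n, n ∈ Λ ↔ t ≤ |xs n g| := fun n => by simp [Λ]
  have hSΛ : S ⊆ Λ := fun n hn => (hmem n).2 (hS n hn)
  have hne : Λ.Nonempty := hSne.mono hSΛ
  have hgreedy : GreedySet (fun n => xs n g) Λ := fun n hn k hk => by
    rw [hmem] at hn hk; exact (not_le.1 hk).le.trans hn
  have hmin : t ≤ Λ.inf' hne fun n => |xs n g| := le_inf' _ _ fun n hn => (hmem n).1 hn
  have hU := htr g Λ hne hgreedy
  rw [norm_smul, Real.norm_of_nonneg (ht.le.trans hmin)] at hU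
  calc t * ‖∑ n ∈ S, x n‖
      ≤ t * (2 * C₀ * ‖∑ n ∈ Λ, sgn (xs n g) • x n‖) := by
        gcongr
        exact norm_sum_le_of_subset_signed hx.biorth htr hC₀ (fun n => sgn_eq_one_or_neg_one _) hSΛ
    _ ≤ 2 * C₀ * ((Λ.inf' hne fun n => |xs n g|) * ‖∑ n ∈ Λ, sgn (xs n g) • x n‖) := by
        rw [mul_left_comm]; gcongr
    _ ≤ 2 * C₀ * (C₀ * ‖g‖) := by gcongr
    _ = 2 * C₀ ^ 2 * ‖g‖ := by ring

/-- Ranking the coefficients of `g` on `A` by size, the weak-type estimate bounds the coefficient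
of rank `j` by a multiple of `‖g‖ / √(v j)`. -/
theorem sum_sq_coord_le (hx : IsXBasis x xs) (htr : TruncationBound x xs C₀) (hC₀ : 0 ≤ C₀)
    {c : ℝ} (hc : 0 < c) {v : ℕ → ℝ} (hv : Monotone v) (hv1 : 0 < v 1)
    (hlow : ∀ S : Finset ℕ, S.Nonempty → c * v #S ≤ ‖∑ n ∈ S, x n‖ ^ 2) (g : X) (A : Finset ℕ) :
    ∑ n ∈ A, (xs n g) ^ 2 ≤ (2 * C₀ ^ 2) ^ 2 / c * (∑ j ∈ Icc 1 #A, (v j)⁻¹) * ‖g‖ ^ 2 := by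
  set M := (2 * C₀ ^ 2) ^ 2 / c
  set rank : ℕ → ℕ := fun n => #{k ∈ A | |xs n g| ≤ |xs k g|}
  have hrank_pos : ∀ n ∈ A, 1 ≤ rank n := fun n hn => card_pos.2 ⟨n, mem_filter.2 ⟨hn, le_rfl⟩⟩
  have hrank_card : ∀ j, #{n ∈ A | rank n ≤ j} ≤ j := by
    intro j
    rcases eq_empty_or_nonempty {n ∈ A | rank n ≤ j} with h | hne
    · simp [h]
    obtain ⟨n, hn, hmin⟩ := exists_min_image _ (fun n => |xs n g|) hne
    calc #{n ∈ A | rank n ≤ j} ≤ rank n :=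
          card_le_card fun k hk => mem_filter.2 ⟨(mem_filter.1 hk).1, hmin k hk⟩
      _ ≤ j := (mem_filter.1 hn).2
  have hterm : ∀ n ∈ A, (xs n g) ^ 2 ≤ M * ‖g‖ ^ 2 * (v (rank n))⁻¹ := by
    intro n hn
    set S := {k ∈ A | |xs n g| ≤ |xs k g|}
    have hvpos : 0 < v #S := hv1.trans_le (hv (hrank_pos n hn))
    have hweak := mul_norm_sum_le_of_le_abs_coord hx htr hC₀ (abs_nonneg (xs n g))
      (S := S) fun k hk => (mem_filter.1 hk).2
    have hsq : (xs n g) ^ 2 * ‖∑ k ∈ S, x k‖ ^ 2 ≤ (2 * C₀ ^ 2) ^ 2 * ‖g‖ ^ 2 := by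
      rw [← sq_abs, ← mul_pow, ← mul_pow]
      exact pow_le_pow_left₀ (by positivity) hweak 2
    have hl := hlow S ⟨n, mem_filter.2 ⟨hn, le_rfl⟩⟩
    rw [← div_eq_mul_inv, le_div_iff₀ hvpos]
    calc (xs n g) ^ 2 * v #S = (xs n g) ^ 2 * (c * v #S) / c := by field_simp
      _ ≤ (xs n g) ^ 2 * ‖∑ k ∈ S, x k‖ ^ 2 / c := by gcongr
      _ ≤ (2 * C₀ ^ 2) ^ 2 * ‖g‖ ^ 2 / c := by gcongr
      _ = M * ‖g‖ ^ 2 := by ring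
  have hanti : AntitoneOn (fun j => (v j)⁻¹) (Set.Ici 1) := fun i hi j _ hij =>
    inv_anti₀ (hv1.trans_le (hv hi)) (hv hij)
  calc ∑ n ∈ A, (xs n g) ^ 2 ≤ ∑ n ∈ A, M * ‖g‖ ^ 2 * (v (rank n))⁻¹ := sum_le_sum hterm
    _ = M * ‖g‖ ^ 2 * ∑ n ∈ A, (v (rank n))⁻¹ := by rw [mul_sum]
    _ ≤ M * ‖g‖ ^ 2 * ∑ j ∈ Icc 1 #A, (v j)⁻¹ := by
        gcongr
        exact sum_comp_le_sum_Icc_of_card_filter_le hanti rank A hrank_pos hrank_card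
    _ = M * (∑ j ∈ Icc 1 #A, (v j)⁻¹) * ‖g‖ ^ 2 := by ring

/-- The coordinate map `g ↦ (x_n^*(g))_{n ∈ A}` into `ℓ_2`. -/
noncomputable def coordOp (xs : ℕ → X →L[ℝ] ℝ) (A : Finset ℕ) : X →L[ℝ] lp (fun _ : ℕ => ℝ) 2 :=
  ∑ n ∈ A, (xs n).smulRight (lp.single 2 n (1 : ℝ))

theorem norm_coordOp_apply_sq (A : Finset ℕ) (g : X) :
    ‖coordOp xs A g‖ ^ 2 = ∑ n ∈ A, (xs n g) ^ 2 := by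
  have happly : coordOp xs A g = ∑ n ∈ A, lp.single 2 n (xs n g) := by
    simp only [coordOp, _root_.sum_apply, ContinuousLinearMap.smulRight_apply,
      ← lp.single_smul, smul_eq_mul, mul_one]
  have h := lp.norm_sum_single (p := 2) (E := fun _ : ℕ => ℝ) (by norm_num) (fun n => xs n g) A
  simp only [ENNReal.toReal_ofNat, Real.rpow_two, Real.norm_eq_abs, sq_abs] at h
  rw [happly, h]

theorem norm_coordOp_le (A : Finset ℕ) {R : ℝ} (hR : 0 ≤ R)
    (hcoef : ∀ g, ∑ n ∈ A, (xs n g) ^ 2 ≤ R ^ 2 * ‖g‖ ^ 2) : ‖coordOp xs A‖ ≤ R := by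
  refine ContinuousLinearMap.opNorm_le_bound _ hR fun g => ?_
  refine pow_le_pow_iff_left₀ (norm_nonneg _) (by positivity) two_ne_zero |>.1 ?_
  rw [norm_coordOp_apply_sq, mul_pow]
  exact hcoef g

theorem norm_coordOp_apply_basis (hb : ∀ m n, xs m (x n) = if m = n then (1 : ℝ) else 0)
    {A : Finset ℕ} {k : ℕ} (hk : k ∈ A) : ‖coordOp xs A (x k)‖ = 1 := by
  have h := norm_coordOp_apply_sq (xs := xs) A (x k)
  simp only [hb, ite_pow, one_pow, zero_pow two_ne_zero, sum_ite_eq', if_pos hk] at h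
  rwa [pow_eq_one_iff_of_nonneg (norm_nonneg _) two_ne_zero] at h

/-- Applying the GT inequality to `coordOp xs A` and the family `(x_k)_{k ∈ A}`. -/
theorem exists_card_le_mul_norm_sum (hGT : IsGTSpace X)
    (hb : ∀ m n, xs m (x n) = if m = n then (1 : ℝ) else 0) (htr : TruncationBound x xs C₀)
    (hC₀ : 0 < C₀) :
    ∃ K > 0, ∀ (A : Finset ℕ) (R : ℝ), 0 ≤ R → (∀ g, ∑ n ∈ A, (xs n g) ^ 2 ≤ R ^ 2 * ‖g‖ ^ 2) →
      (#A : ℝ) ≤ K * R * ‖∑ n ∈ A, x n‖ := by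
  obtain ⟨D, hD⟩ := hGT
  refine ⟨max D 1 * (4 * C₀), by positivity, fun A R hR hcoef => ?_⟩
  obtain ⟨ε, hε, hGTA⟩ := hD (coordOp xs A) A x
  calc (#A : ℝ) = ∑ k ∈ A, ‖coordOp xs A (x k)‖ := by
        rw [sum_congr rfl fun k hk => norm_coordOp_apply_basis hb hk]; simp
    _ ≤ D * ‖coordOp xs A‖ * ‖∑ k ∈ A, ε k • x k‖ := hGTA
    _ ≤ max D 1 * R * (4 * C₀ * ‖∑ n ∈ A, x n‖) := by
        gcongr
        · exact le_max_left _ _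
        · exact norm_coordOp_le A hR hcoef
        · exact norm_sum_signed_le hb htr hC₀.le hε A
    _ = max D 1 * (4 * C₀) * R * ‖∑ n ∈ A, x n‖ := by ring

theorem exists_mul_le_norm_sum_sq_of_mul_le_norm_sum_sq (hGT : IsGTSpace X) (hx : IsXBasis x xs)
    (htr : TruncationBound x xs C₀) (hC₀ : 0 < C₀) {c : ℝ} (hc : 0 < c) {v v' : ℕ → ℝ}
    (hv : Monotone v) (hv1 : 0 < v 1)
    (hlow : ∀ S : Finset ℕ, S.Nonempty → c * v #S ≤ ‖∑ n ∈ S, x n‖ ^ 2)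
    (hv' : ∀ m : ℕ, 1 ≤ m → v' m * ∑ j ∈ Icc 1 m, (v j)⁻¹ ≤ (m : ℝ) ^ 2) :
    ∃ c' > 0, ∀ S : Finset ℕ, S.Nonempty → c' * v' #S ≤ ‖∑ n ∈ S, x n‖ ^ 2 := by
  obtain ⟨K, hK, hcard⟩ := exists_card_le_mul_norm_sum hGT hx.biorth htr hC₀
  set M := (2 * C₀ ^ 2) ^ 2 / c
  refine ⟨(K ^ 2 * M)⁻¹, by positivity, fun S hS => ?_⟩
  set σ := ∑ j ∈ Icc 1 #S, (v j)⁻¹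
  have hS1 : 1 ≤ #S := card_pos.2 hS
  have hσ : 0 < σ := sum_pos (fun j hj => inv_pos.2 (hv1.trans_le (hv (mem_Icc.1 hj).1)))
    (nonempty_Icc.2 hS1)
  have hGTS := hcard S √(M * σ) (Real.sqrt_nonneg _) fun g => by
    rw [Real.sq_sqrt (by positivity)]
    exact sum_sq_coord_le hx htr hC₀.le hc hv hv1 hlow g S
  have hsq : (#S : ℝ) ^ 2 ≤ K ^ 2 * M * ‖∑ n ∈ S, x n‖ ^ 2 * σ := by
    calc (#S : ℝ) ^ 2 ≤ (K * √(M * σ) * ‖∑ n ∈ S, x n‖) ^ 2 :=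
          pow_le_pow_left₀ (Nat.cast_nonneg _) hGTS 2
      _ = K ^ 2 * M * ‖∑ n ∈ S, x n‖ ^ 2 * σ := by
          rw [mul_pow, mul_pow, Real.sq_sqrt (by positivity)]; ring
  rw [inv_mul_le_iff₀ (by positivity)]
  exact le_of_mul_le_mul_right ((hv' #S hS1).trans hsq) hσ

theorem exists_le_norm_sum_sq (hx : IsXBasis x xs) (htr : TruncationBound x xs C₀)
    (hC₀ : 0 < C₀) : ∃ c > 0, ∀ S : Finset ℕ, S.Nonempty → c ≤ ‖∑ n ∈ S, x n‖ ^ 2 := by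
  obtain ⟨a, ha, hxa⟩ := hx.norm_lb
  refine ⟨(a / (2 * C₀)) ^ 2, by positivity, fun S ⟨n, hn⟩ => ?_⟩
  have h : ‖x n‖ ≤ 2 * C₀ * ‖∑ k ∈ S, x k‖ := by
    simpa using norm_sum_le_of_subset hx.biorth htr hC₀.le (singleton_subset_iff.2 hn)
  gcongr
  rw [div_le_iff₀' (by positivity)]
  exact (hxa n).trans h

end

theorem exists_democracy_constants {E : Type*} [SeminormedAddCommGroup E] {x : ℕ → E}
    {c β : ℝ} (hc : 0 < c) (hlow : ∀ A : Finset ℕ, c * #A ≤ ‖∑ n ∈ A, x n‖)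
    (hβ : ∀ n, ‖x n‖ ≤ β) :
    ∃ c C : ℝ, 0 < c ∧ c ≤ C ∧
      (∀ m : ℕ, 1 ≤ m → ∀ A : Finset ℕ, m ≤ #A → c * (m : ℝ) ≤ ‖∑ n ∈ A, x n‖) ∧
      (∀ m : ℕ, 1 ≤ m → ∀ A : Finset ℕ, #A ≤ m → ‖∑ n ∈ A, x n‖ ≤ C * (m : ℝ)) ∧
      (∃ D ≥ (1 : ℝ), ∀ A B : Finset ℕ, #A = #B → ‖∑ n ∈ A, x n‖ ≤ D * ‖∑ n ∈ B, x n‖) := by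
  set C := max β c
  have hC : 0 ≤ C := hc.le.trans (le_max_right _ _)
  have hup : ∀ A : Finset ℕ, ‖∑ n ∈ A, x n‖ ≤ C * #A := fun A => by
    rw [mul_comm, ← nsmul_eq_mul, ← sum_const]
    exact norm_sum_le_of_le A fun n _ => (hβ n).trans (le_max_left _ _)
  refine ⟨c, C, hc, le_max_right _ _, fun m _ A hA => ?_, fun m _ A hA => ?_,
    max 1 (C / c), le_max_left _ _, fun A B hAB => ?_⟩
  · exact (mul_le_mul_of_nonneg_left (by exact_mod_cast hA) hc.le).trans (hlow A)
  · exact (hup A).trans (mul_le_mul_of_nonneg_left (by exact_mod_cast hA) hC)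
  calc ‖∑ n ∈ A, x n‖ ≤ C * #A := hup A
    _ = C / c * (c * #B) := by rw [hAB]; field_simp
    _ ≤ C / c * ‖∑ n ∈ B, x n‖ := mul_le_mul_of_nonneg_left (hlow B) (by positivity)
    _ ≤ max 1 (C / c) * ‖∑ n ∈ B, x n‖ := by gcongr; exact le_max_right _ _

theorem stmt11_general {X : Type*} [NormedAddCommGroup X] [NormedSpace ℝ X]
    (hGT : IsGTSpace X) (x : ℕ → X) (xs : ℕ → X →L[ℝ] ℝ)
    (hbasis : IsXBasis x xs) (htrunc : BRTP x xs) :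
    ∃ c C : ℝ, 0 < c ∧ c ≤ C ∧
      (∀ m : ℕ, 1 ≤ m → ∀ A : Finset ℕ, m ≤ A.card → c * (m : ℝ) ≤ ‖∑ n ∈ A, x n‖) ∧
      (∀ m : ℕ, 1 ≤ m → ∀ A : Finset ℕ, A.card ≤ m → ‖∑ n ∈ A, x n‖ ≤ C * (m : ℝ)) ∧
      (∃ D ≥ (1 : ℝ), ∀ A B : Finset ℕ, A.card = B.card →
        ‖∑ n ∈ A, x n‖ ≤ D * ‖∑ n ∈ B, x n‖) := by
  obtain ⟨C₀, hC₀1, htr⟩ := htrunc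
  have hC₀ : 0 < C₀ := by linarith
  have improve := @exists_mul_le_norm_sum_sq_of_mul_le_norm_sum_sq _ _ _ x xs C₀ hGT hbasis htr hC₀
  obtain ⟨c₀, hc₀, h₀⟩ := exists_le_norm_sum_sq hbasis htr hC₀
  obtain ⟨c₁, hc₁, h₁⟩ := improve hc₀ (v := fun _ => 1) (v' := fun m => m) monotone_const one_pos
    (fun S hS => by simpa using h₀ S hS) fun m _ => by simp [sq]
  obtain ⟨c₂, hc₂, h₂⟩ := improve hc₁ (v' := fun m => m * √m / 2) Nat.mono_cast (by simp) h₁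
    fun m _ => by
      nlinarith [sum_Icc_inv_le_two_mul_sqrt m, Real.mul_self_sqrt (Nat.cast_nonneg (α := ℝ) m),
        mul_nonneg (Nat.cast_nonneg (α := ℝ) m) (Real.sqrt_nonneg m)]
  obtain ⟨c₃, hc₃, h₃⟩ := improve hc₂ (v := fun m => m * √m / 2) (v' := fun m => m ^ 2 / 6)
    (fun a b hab => by simp only; gcongr) (by norm_num) h₂ fun m _ => by
      have h := sum_Icc_inv_mul_sqrt_le_three m
      simp only [div_eq_mul_inv, mul_inv, inv_inv, ← sum_mul] at h ⊢
      nlinarith [sq_nonneg (m : ℝ)]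
  have hlow : ∀ A : Finset ℕ, √(c₃ / 6) * #A ≤ ‖∑ n ∈ A, x n‖ := fun A => by
    rcases A.eq_empty_or_nonempty with rfl | hA
    · simp
    refine (pow_le_pow_iff_left₀ (by positivity) (norm_nonneg _) two_ne_zero).1 ?_
    rw [mul_pow, Real.sq_sqrt (by positivity)]
    linarith [h₃ A hA]
  obtain ⟨β, hβ⟩ := hbasis.norm_ub
  exact exists_democracy_constants (by positivity) hlow hβ

/-- A basis of a GT space with the bounded restricted truncation operator
property is democratic, with both democracy functions of order `m`. -/
theorem stmt11 {X : Type*} [NormedAddCommGroup X] [NormedSpace ℝ X] [CompleteSpace X]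
    (hGT : IsGTSpace X) (x : ℕ → X) (xs : ℕ → X →L[ℝ] ℝ)
    (hbasis : IsXBasis x xs) (htrunc : BRTP x xs) :
    ∃ c C : ℝ, 0 < c ∧ c ≤ C ∧
      (∀ m : ℕ, 1 ≤ m → ∀ A : Finset ℕ, m ≤ A.card → c * (m : ℝ) ≤ ‖∑ n ∈ A, x n‖) ∧
      (∀ m : ℕ, 1 ≤ m → ∀ A : Finset ℕ, A.card ≤ m → ‖∑ n ∈ A, x n‖ ≤ C * (m : ℝ)) ∧
      (∃ D ≥ (1 : ℝ), ∀ A B : Finset ℕ, A.card = B.card →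
        ‖∑ n ∈ A, x n‖ ≤ D * ‖∑ n ∈ B, x n‖) :=
  stmt11_general hGT x xs hbasis htrunc
end
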